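/- Let ε ≥ 0 and Δ > 0. Let i ≤ 0 and 0 ≤ r < Δ be real numbers, and let a, b, m be real numbers satisfying |a − Φ⁺(i)| ≤ ε, |b − (Φ⁺)'(i)| ≤ ε, and |m − r·b| ≤ ε. Then the fixed-point first-order Taylor approximation a − m of Φ⁺(i − r) satisfies |Φ⁺(i − r) − (a − m)| ≤ E⁺(0, Δ) + (2 + Δ)·ε. -/

import Mathlib

/-- Φ⁺(x) = log₂(1 + 2^x) -/
noncomputable def Phip (x : ℝ) : ℝ := Real.logb 2 (1 + (2:ℝ) ^ x)

/-- (Φ⁺)'(x) = 2^x / (2^x + 1) -/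
noncomputable def dPhip (x : ℝ) : ℝ := (2:ℝ) ^ x / ((2:ℝ) ^ x + 1)

/-- First-order Taylor remainder E⁺(i, r) = Φ⁺(i − r) − Φ⁺(i) + r·(Φ⁺)'(i) -/
noncomputable def Ep (i r : ℝ) : ℝ := Phip (i - r) - Phip i + r * dPhip i

/-!
The error `Φ⁺(i - r) - (a - m)` splits as `E⁺(i, r) + (Φ⁺(i) - a) + (m - r b) + r (b - (Φ⁺)'(i))`;
the last three terms contribute at most `ε + ε + Δ ε`. For the remainder, `0 ≤ E⁺(i, r)` by convexity
of `Φ⁺`, and `E⁺` is nondecreasing in `r ≥ 0` and in `i ≤ 0`, so `E⁺(i, r) ≤ E⁺(0, Δ)`. Monotonicity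
in `i` reduces, after differentiating, to `(Φ⁺)'(i) - (Φ⁺)'(i - r) ≤ r (Φ⁺)''(i)`, i.e. to convexity
of `(Φ⁺)'` on `(-∞, 0]`.
-/

open Set

theorem sub_le_mul_of_hasDerivAt_of_monotoneOn {f f' : ℝ → ℝ} {x r : ℝ} (hr : 0 ≤ r)
    (hf : ∀ y ∈ Icc (x - r) x, HasDerivAt f (f' y) y) (hf' : MonotoneOn f' (Icc (x - r) x)) :
    f x - f (x - r) ≤ r * f' x := by
  rcases hr.eq_or_lt with rfl | hr
  · simp
  obtain ⟨c, hc, hslope⟩ := exists_hasDerivAt_eq_slope f f' (sub_lt_self x hr)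
    (HasDerivAt.continuousOn hf) fun y hy => hf y (Ioo_subset_Icc_self hy)
  have hc' : f' c ≤ f' x :=
    hf' (Ioo_subset_Icc_self hc) (right_mem_Icc.2 (sub_le_self x hr.le)) hc.2.le
  rw [sub_sub_cancel, eq_div_iff hr.ne'] at hslope
  nlinarith

noncomputable def ddPhip (x : ℝ) : ℝ := Real.log 2 * (2:ℝ) ^ x / ((2:ℝ) ^ x + 1) ^ 2

lemma hasDerivAt_Phip (x : ℝ) : HasDerivAt Phip (dPhip x) x := by
  have h2x := Real.rpow_pos_of_pos two_pos x
  have h := ((((Real.hasStrictDerivAt_const_rpow two_pos x).hasDerivAt).const_add 1).log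
    (by positivity)).div_const (Real.log 2)
  refine h.congr_deriv ?_
  have hlog2 : Real.log 2 ≠ 0 := (Real.log_pos one_lt_two).ne'
  unfold dPhip
  field_simp
  ring

lemma hasDerivAt_dPhip (x : ℝ) : HasDerivAt dPhip (ddPhip x) x := by
  have h2x := Real.rpow_pos_of_pos two_pos x
  have h := (Real.hasStrictDerivAt_const_rpow two_pos x).hasDerivAt
  refine (h.div (h.add_const 1) (by positivity)).congr_deriv ?_
  unfold ddPhip
  field_simp
  ring

lemma dPhip_monotone : Monotone dPhip := by
  intro x y hxy
  have h2x := Real.rpow_pos_of_pos two_pos x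
  have h2y := Real.rpow_pos_of_pos two_pos y
  have h := Real.rpow_le_rpow_of_exponent_le one_le_two hxy
  unfold dPhip
  rw [div_le_div_iff₀ (by positivity) (by positivity)]
  linarith

lemma div_add_one_sq_le_div_add_one_sq {t u : ℝ} (ht : 0 < t) (htu : t ≤ u) (hu : u ≤ 1) :
    t / (t + 1) ^ 2 ≤ u / (u + 1) ^ 2 := by
  have hu₀ : 0 < u := ht.trans_le htu
  rw [div_le_div_iff₀ (by positivity) (by positivity)]
  have htu' : t * u ≤ 1 := by nlinarith
  nlinarith [mul_nonneg (sub_nonneg.2 htu) (sub_nonneg.2 htu')]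

lemma ddPhip_monotoneOn : MonotoneOn ddPhip (Iic 0) := by
  intro x hx y hy hxy
  have h := div_add_one_sq_le_div_add_one_sq (Real.rpow_pos_of_pos two_pos x)
    (Real.rpow_le_rpow_of_exponent_le one_le_two hxy) (Real.rpow_le_one_of_one_le_of_nonpos one_le_two hy)
  unfold ddPhip
  simp only [mul_div_assoc]
  exact mul_le_mul_of_nonneg_left h (Real.log_nonneg one_le_two)

lemma Ep_nonneg (i : ℝ) {r : ℝ} (hr : 0 ≤ r) : 0 ≤ Ep i r := by
  have h := sub_le_mul_of_hasDerivAt_of_monotoneOn (x := i) hr (fun y _ => hasDerivAt_Phip y)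
    (dPhip_monotone.monotoneOn _)
  unfold Ep
  linarith

lemma Ep_mono_right (i : ℝ) {r s : ℝ} (hr : 0 ≤ r) (hrs : r ≤ s) : Ep i r ≤ Ep i s := by
  have hsplit : Ep i s - Ep i r = Ep (i - r) (s - r) + (s - r) * (dPhip i - dPhip (i - r)) := by
    unfold Ep
    ring_nf
  have hE := Ep_nonneg (i - r) (sub_nonneg.2 hrs)
  have hd := dPhip_monotone (sub_le_self i hr)
  nlinarith

lemma Ep_monotoneOn_left {r : ℝ} (hr : 0 ≤ r) : MonotoneOn (fun i => Ep i r) (Iic 0) := by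
  have hderiv : ∀ i, HasDerivAt (fun i => Ep i r) (dPhip (i - r) - dPhip i + r * ddPhip i) i :=
    fun i => (((hasDerivAt_Phip (i - r)).comp_sub_const i r).sub (hasDerivAt_Phip i)).add
      ((hasDerivAt_dPhip i).const_mul r)
  refine monotoneOn_of_hasDerivWithinAt_nonneg (convex_Iic 0)
    (HasDerivAt.continuousOn fun i _ => hderiv i) (fun i _ => (hderiv i).hasDerivWithinAt) ?_
  intro i hi
  rw [interior_Iic] at hi
  have h := sub_le_mul_of_hasDerivAt_of_monotoneOn hr (fun y _ => hasDerivAt_dPhip y)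
    (ddPhip_monotoneOn.mono fun y hy => hy.2.trans (le_of_lt hi))
  linarith

theorem stmt_3_general (ε Δ : ℝ)
    (i r : ℝ) (hi : i ≤ 0) (hr0 : 0 ≤ r) (hrΔ : r < Δ)
    (a b m : ℝ)
    (ha : |a - Phip i| ≤ ε)
    (hb : |b - dPhip i| ≤ ε)
    (hm : |m - r * b| ≤ ε) :
    |Phip (i - r) - (a - m)| ≤ Ep 0 Δ + (2 + Δ) * ε := by
  have hE₀ : 0 ≤ Ep i r := Ep_nonneg i hr0
  have hE₁ : Ep i r ≤ Ep 0 Δ :=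
    (Ep_monotoneOn_left hr0 hi self_mem_Iic hi).trans (Ep_mono_right 0 hr0 hrΔ.le)
  have hsplit : Phip (i - r) - (a - m) = Ep i r + (Phip i - a) + (m - r * b) + r * (b - dPhip i) := by
    unfold Ep
    ring
  have hrb : |r * (b - dPhip i)| ≤ Δ * ε := by
    rw [abs_mul, abs_of_nonneg hr0]
    exact mul_le_mul hrΔ.le hb (abs_nonneg _) (hr0.trans hrΔ.le)
  rw [abs_sub_comm] at ha
  rw [hsplit]
  obtain ⟨ha₁, ha₂⟩ := abs_le.1 ha
  obtain ⟨hm₁, hm₂⟩ := abs_le.1 hm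
  obtain ⟨hrb₁, hrb₂⟩ := abs_le.1 hrb
  exact abs_le.2 ⟨by linarith, by linarith⟩

theorem stmt_3 (ε Δ : ℝ) (hε : 0 ≤ ε) (hΔ : 0 < Δ)
    (i r : ℝ) (hi : i ≤ 0) (hr0 : 0 ≤ r) (hrΔ : r < Δ)
    (a b m : ℝ)
    (ha : |a - Phip i| ≤ ε)
    (hb : |b - dPhip i| ≤ ε)
    (hm : |m - r * b| ≤ ε) :
    |Phip (i - r) - (a - m)| ≤ Ep 0 Δ + (2 + Δ) * ε :=
  stmt_3_general ε Δ i r hi hr0 hrΔ a b m ha hb hm
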